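/- Let m, n be positive integers, A an m×m real positive-semidefinite matrix, B an n×n real positive-semidefinite matrix, and C an m×n real matrix. Then there exists an m×n real matrix Γ such that the block matrix with blocks A, Γ (top row) and Γᵀ, B (bottom row) is positive semidefinite and trace(C Γᵀ) = ‖A^{1/2} C B^{1/2}‖_tr. In particular, one may take Γ = A^{1/2} U V B^{1/2}, where A^{1/2} C B^{1/2} = U Σ V is a singular value decomposition. -/

import Mathlib

open Matrix

/-- The positive semidefinite square root of a positive semidefinite matrix
(the definition `Matrix.PosSemidef.sqrt` of the older Mathlib, since removed). -/
noncomputable def Matrix.PosSemidef.sqrt {n : Type*} [Fintype n] [DecidableEq n] {𝕜 : Type*}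
    [RCLike 𝕜] [PartialOrder 𝕜] [StarOrderedRing 𝕜] {A : Matrix n n 𝕜} (hA : A.PosSemidef) : Matrix n n 𝕜 :=
  hA.1.eigenvectorUnitary.1 * diagonal ((↑) ∘ (√·) ∘ hA.1.eigenvalues) *
  (star hA.1.eigenvectorUnitary : Matrix n n 𝕜)

/-- The trace norm of a real rectangular matrix: the trace of the positive-semidefinite
square root of `Mᵀ M` (equivalently, the sum of the singular values of `M`). -/
noncomputable def traceNorm {m n : ℕ} (M : Matrix (Fin m) (Fin n) ℝ) : ℝ :=
  (Matrix.posSemidef_conjTranspose_mul_self M).sqrt.trace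

/-- The rectangular "identity" matrix, with ones on the diagonal and zeros elsewhere,
used to interpret the product `U V` of the orthogonal factors of a singular value
decomposition as an `m × n` matrix. -/
def rectId (m n : ℕ) : Matrix (Fin m) (Fin n) ℝ :=
  Matrix.of fun i j => if (i : ℕ) = (j : ℕ) then 1 else 0

open scoped MatrixOrder in
private lemma Matrix.PosSemidef.sqrt_eq_cfc {k : ℕ} {A : Matrix (Fin k) (Fin k) ℝ}
    (hA : A.PosSemidef) : hA.sqrt = CFC.sqrt A := by
  rw [CFC.sqrt_eq_cfc, cfc_nnreal_eq_real _ A, hA.1.cfc_eq]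
  simp only [IsHermitian.cfc, Unitary.conjStarAlgAut_apply, Matrix.PosSemidef.sqrt]
  congr 3
  funext i
  simp [Real.coe_sqrt, Real.coe_toNNReal', max_eq_left (hA.eigenvalues_nonneg i)]

open scoped MatrixOrder in
private lemma Matrix.PosSemidef.posSemidef_sqrt {k : ℕ} {A : Matrix (Fin k) (Fin k) ℝ}
    (hA : A.PosSemidef) : hA.sqrt.PosSemidef := by
  rw [hA.sqrt_eq_cfc]; exact (CFC.sqrt_nonneg A).posSemidef

open scoped MatrixOrder in
private lemma Matrix.PosSemidef.sqrt_mul_self {k : ℕ} {A : Matrix (Fin k) (Fin k) ℝ}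
    (hA : A.PosSemidef) : hA.sqrt * hA.sqrt = A := by
  rw [hA.sqrt_eq_cfc]; exact CFC.sqrt_mul_sqrt_self A hA.nonneg

open scoped MatrixOrder in
private lemma Matrix.PosSemidef.eq_sqrt_of_sq_eq {k : ℕ} {X N : Matrix (Fin k) (Fin k) ℝ}
    (hX : X.PosSemidef) (hN : N.PosSemidef) (h : X ^ 2 = N) : X = hN.sqrt := by
  rw [hN.sqrt_eq_cfc]
  exact (CFC.sqrt_unique (by rw [← sq]; exact h) hX.nonneg).symm

private lemma ct_eq {α β : Type*} (M : Matrix α β ℝ) : Mᴴ = Mᵀ :=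
  conjTranspose_eq_transpose_of_trivial M

private lemma block_psd {m n : ℕ} {A : Matrix (Fin m) (Fin m) ℝ} {B : Matrix (Fin n) (Fin n) ℝ}
    (hA : A.PosSemidef) (hB : B.PosSemidef) (W Γ : Matrix (Fin m) (Fin n) ℝ)
    (hΓ : Γ = hA.sqrt * W * hB.sqrt)
    (hW : ((1 : Matrix (Fin n) (Fin n) ℝ) - Wᵀ * W).PosSemidef) :
    (fromBlocks A Γ Γᵀ B).PosSemidef := by
  have hsA : hA.sqrtᵀ = hA.sqrt := by rw [← ct_eq]; exact hA.posSemidef_sqrt.1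
  have hsB : hB.sqrtᵀ = hB.sqrt := by rw [← ct_eq]; exact hB.posSemidef_sqrt.1
  have hsW : hW.sqrtᵀ = hW.sqrt := by rw [← ct_eq]; exact hW.posSemidef_sqrt.1
  have hz : (fromBlocks (0 : Matrix (Fin m) (Fin m) ℝ) 0 0 ((1 : Matrix (Fin n) (Fin n) ℝ) - Wᵀ * W)).PosSemidef := by
    have h := posSemidef_conjTranspose_mul_self
      (fromBlocks (0 : Matrix (Fin m) (Fin m) ℝ) 0 0 hW.sqrt)
    have e : (fromBlocks (0 : Matrix (Fin m) (Fin m) ℝ) 0 0 hW.sqrt)ᴴ *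
        fromBlocks (0 : Matrix (Fin m) (Fin m) ℝ) 0 0 hW.sqrt
        = fromBlocks 0 0 0 ((1 : Matrix (Fin n) (Fin n) ℝ) - Wᵀ * W) := by
      rw [ct_eq, fromBlocks_transpose, fromBlocks_multiply]
      simp [hsW, hW.sqrt_mul_self]
    rwa [e] at h
  have hP : (fromBlocks (1 : Matrix (Fin m) (Fin m) ℝ) W Wᵀ (1 : Matrix (Fin n) (Fin n) ℝ)).PosSemidef := by
    have hK := posSemidef_conjTranspose_mul_self
      (fromBlocks (1 : Matrix (Fin m) (Fin m) ℝ) W (0 : Matrix (Fin n) (Fin m) ℝ) (0 : Matrix (Fin n) (Fin n) ℝ))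
    have e : (fromBlocks (1 : Matrix (Fin m) (Fin m) ℝ) W 0 0)ᴴ * fromBlocks 1 W 0 0
          + fromBlocks (0 : Matrix (Fin m) (Fin m) ℝ) 0 0 ((1 : Matrix (Fin n) (Fin n) ℝ) - Wᵀ * W)
        = fromBlocks (1 : Matrix (Fin m) (Fin m) ℝ) W Wᵀ (1 : Matrix (Fin n) (Fin n) ℝ) := by
      rw [ct_eq, fromBlocks_transpose, fromBlocks_multiply, fromBlocks_add]
      congr 1 <;> simp
    rw [← e]; exact hK.add hz
  have h := hP.conjTranspose_mul_mul_same (fromBlocks hA.sqrt 0 0 hB.sqrt)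
  have e : (fromBlocks hA.sqrt (0 : Matrix (Fin m) (Fin n) ℝ) (0 : Matrix (Fin n) (Fin m) ℝ) hB.sqrt)ᴴ *
      fromBlocks (1 : Matrix (Fin m) (Fin m) ℝ) W Wᵀ (1 : Matrix (Fin n) (Fin n) ℝ) *
      fromBlocks hA.sqrt 0 0 hB.sqrt = fromBlocks A Γ Γᵀ B := by
    rw [ct_eq, fromBlocks_transpose, fromBlocks_multiply, fromBlocks_multiply, hΓ]
    congr 1 <;> simp [hsA, hsB, hA.sqrt_mul_self, hB.sqrt_mul_self, transpose_mul, Matrix.mul_assoc]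
  rwa [e] at h

private lemma trace_reduce {m n : ℕ} {A : Matrix (Fin m) (Fin m) ℝ} {B : Matrix (Fin n) (Fin n) ℝ}
    (hA : A.PosSemidef) (hB : B.PosSemidef) (C W Γ : Matrix (Fin m) (Fin n) ℝ)
    (hΓ : Γ = hA.sqrt * W * hB.sqrt) :
    (C * Γᵀ).trace = (Wᵀ * (hA.sqrt * C * hB.sqrt)).trace := by
  have hsA : hA.sqrtᵀ = hA.sqrt := by rw [← ct_eq]; exact hA.posSemidef_sqrt.1
  have hsB : hB.sqrtᵀ = hB.sqrt := by rw [← ct_eq]; exact hB.posSemidef_sqrt.1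
  rw [hΓ, transpose_mul, transpose_mul, hsA, hsB]
  simp only [← Matrix.mul_assoc]
  rw [Matrix.trace_mul_comm (C * hB.sqrt * Wᵀ) hA.sqrt]
  simp only [← Matrix.mul_assoc]
  rw [Matrix.trace_mul_comm (hA.sqrt * C * hB.sqrt) Wᵀ]
  simp only [← Matrix.mul_assoc]

private lemma sum_ite_val {m n : ℕ} (j : Fin n) (g : Fin m → ℝ) :
    (∑ i : Fin m, if (i : ℕ) = (j : ℕ) then g i else 0)
      = if h : (j : ℕ) < m then g ⟨(j : ℕ), h⟩ else 0 := by
  split_ifs with h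
  · rw [Finset.sum_eq_single (⟨(j : ℕ), h⟩ : Fin m)]
    · simp
    · intro i _ hi
      exact if_neg fun hc => hi (Fin.ext hc)
    · simp
  · exact Finset.sum_eq_zero fun i _ => if_neg fun hc => h (by have := i.isLt; omega)

private lemma diag_StS {m n : ℕ} (S : Matrix (Fin m) (Fin n) ℝ)
    (hS0 : ∀ (i : Fin m) (j : Fin n), (i : ℕ) ≠ (j : ℕ) → S i j = 0) :
    Sᵀ * S = diagonal (fun j : Fin n =>
      (if h : (j : ℕ) < m then S ⟨(j : ℕ), h⟩ j else 0) *
      (if h : (j : ℕ) < m then S ⟨(j : ℕ), h⟩ j else 0)) := by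
  ext j j'
  have : ∀ i : Fin m, S i j * S i j' = if (i : ℕ) = (j : ℕ) then S i j * S i j' else 0 := by
    intro i
    split_ifs with h
    · rfl
    · rw [hS0 i j h, zero_mul]
  simp only [Matrix.mul_apply, transpose_apply]
  rw [Finset.sum_congr rfl fun i _ => this i, sum_ite_val]
  rcases eq_or_ne j j' with rfl | hne
  · simp only [diagonal_apply_eq]
    split_ifs with h
    · rfl
    · rw [zero_mul]
  · rw [diagonal_apply_ne _ hne]
    split_ifs with h
    · exact mul_eq_zero_of_right _ (hS0 _ _ (by simpa using fun hc => hne (Fin.ext hc)))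
    · rfl

private lemma diag_rect_mul {m n : ℕ} (S : Matrix (Fin m) (Fin n) ℝ)
    (hS0 : ∀ (i : Fin m) (j : Fin n), (i : ℕ) ≠ (j : ℕ) → S i j = 0) :
    (rectId m n)ᵀ * S
      = diagonal (fun j : Fin n => if h : (j : ℕ) < m then S ⟨(j : ℕ), h⟩ j else 0) := by
  ext j j'
  have : ∀ i : Fin m,
      (if (i : ℕ) = (j : ℕ) then (1:ℝ) else 0) * S i j'
        = if (i : ℕ) = (j : ℕ) then S i j' else 0 := by
    intro i; split_ifs <;> simp
  simp only [Matrix.mul_apply, transpose_apply, rectId, Matrix.of_apply]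
  rw [Finset.sum_congr rfl fun i _ => this i, sum_ite_val]
  rcases eq_or_ne j j' with rfl | hne
  · simp
  · rw [diagonal_apply_ne _ hne]
    split_ifs with h
    · exact hS0 _ _ (by simpa using fun hc => hne (Fin.ext hc))
    · rfl

private lemma part2 {m n : ℕ} {A : Matrix (Fin m) (Fin m) ℝ} {B : Matrix (Fin n) (Fin n) ℝ}
    {C : Matrix (Fin m) (Fin n) ℝ} (hA : A.PosSemidef) (hB : B.PosSemidef)
    (U : Matrix (Fin m) (Fin m) ℝ) (S : Matrix (Fin m) (Fin n) ℝ) (V : Matrix (Fin n) (Fin n) ℝ)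
    (hU1 : Uᵀ * U = 1) (hU2 : U * Uᵀ = 1) (hV1 : Vᵀ * V = 1) (hV2 : V * Vᵀ = 1)
    (hS0 : ∀ (i : Fin m) (j : Fin n), (i : ℕ) ≠ (j : ℕ) → S i j = 0)
    (hS1 : ∀ (i : Fin m) (j : Fin n), (i : ℕ) = (j : ℕ) → 0 ≤ S i j)
    (hM : hA.sqrt * C * hB.sqrt = U * S * V) :
    ((1 : Matrix (Fin n) (Fin n) ℝ) - (U * rectId m n * V)ᵀ * (U * rectId m n * V)).PosSemidef ∧
    ((U * rectId m n * V)ᵀ * (hA.sqrt * C * hB.sqrt)).trace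
      = traceNorm (hA.sqrt * C * hB.sqrt) := by
  set E := rectId m n with hE
  set W := U * E * V with hW
  set d : Fin n → ℝ := fun j => if h : (j : ℕ) < m then S ⟨(j : ℕ), h⟩ j else 0 with hd
  have hd0 : ∀ j, 0 ≤ d j := by
    intro j
    rw [hd]
    dsimp only
    split_ifs with h
    · exact hS1 _ _ rfl
    · exact le_refl 0
  have hE0 : ∀ (i : Fin m) (j : Fin n), (i : ℕ) ≠ (j : ℕ) → E i j = 0 := by
    intro i j hij
    simp only [hE, rectId, Matrix.of_apply, if_neg hij]
  have hEtE : Eᵀ * E = diagonal (fun j : Fin n => if h : (j : ℕ) < m then (1:ℝ) else 0) := by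
    have hfun : (fun j : Fin n => if h : (j : ℕ) < m then E ⟨(j : ℕ), h⟩ j else 0)
        = (fun j : Fin n => if h : (j : ℕ) < m then (1:ℝ) else 0) := by
      funext j
      split_ifs with h
      · simp [hE, rectId]
      · rfl
    rw [diag_rect_mul E hE0, hfun]
  have hEtS : Eᵀ * S = diagonal d := diag_rect_mul S hS0
  constructor
  · -- PSD of 1 - WᵀW
    have hWtW : Wᵀ * W
        = Vᵀ * diagonal (fun j : Fin n => if h : (j : ℕ) < m then (1:ℝ) else 0) * V := by
      rw [hW]
      simp only [transpose_mul, Matrix.mul_assoc]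
      rw [show Uᵀ * (U * (E * V)) = E * V by rw [← Matrix.mul_assoc, hU1, Matrix.one_mul]]
      rw [← Matrix.mul_assoc Eᵀ E V, hEtE]
    have hdiag : diagonal (fun j : Fin n => (1:ℝ) - if h : (j : ℕ) < m then (1:ℝ) else 0)
        = 1 - diagonal (fun j : Fin n => if h : (j : ℕ) < m then (1:ℝ) else 0) := by
      ext j j'
      rcases eq_or_ne j j' with rfl | hne
      · simp
      · simp [diagonal_apply_ne _ hne, hne]
    have hsub : (1 : Matrix (Fin n) (Fin n) ℝ) - Wᵀ * W
        = Vᵀ * diagonal (fun j : Fin n => (1:ℝ) - if h : (j : ℕ) < m then (1:ℝ) else 0) * V := by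
      rw [hWtW, hdiag, Matrix.mul_sub, Matrix.sub_mul, Matrix.mul_one, hV1]
    rw [hsub]
    have hdpsd : (diagonal (fun j : Fin n =>
        (1:ℝ) - if h : (j : ℕ) < m then (1:ℝ) else 0)).PosSemidef := by
      refine posSemidef_diagonal_iff.mpr fun j => ?_
      split_ifs <;> norm_num
    have := hdpsd.conjTranspose_mul_mul_same V
    rwa [ct_eq] at this
  · -- trace equality
    have hN := Matrix.posSemidef_conjTranspose_mul_self (hA.sqrt * C * hB.sqrt)
    have hWM : Wᵀ * (hA.sqrt * C * hB.sqrt) = Vᵀ * diagonal d * V := by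
      rw [hM, hW]
      simp only [transpose_mul, Matrix.mul_assoc]
      rw [show Uᵀ * (U * (S * V)) = S * V by rw [← Matrix.mul_assoc, hU1, Matrix.one_mul]]
      rw [← Matrix.mul_assoc Eᵀ S V, hEtS]
    have hXpsd : (Vᵀ * diagonal d * V).PosSemidef := by
      have hdpsd : (diagonal d).PosSemidef := posSemidef_diagonal_iff.mpr hd0
      have := hdpsd.conjTranspose_mul_mul_same V
      rwa [ct_eq] at this
    have hXsq : (Vᵀ * diagonal d * V) ^ 2
        = (hA.sqrt * C * hB.sqrt)ᴴ * (hA.sqrt * C * hB.sqrt) := by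
      rw [pow_two, ct_eq, hM]
      simp only [transpose_mul, Matrix.mul_assoc]
      rw [show V * (Vᵀ * (diagonal d * V)) = diagonal d * V by
        rw [← Matrix.mul_assoc, hV2, Matrix.one_mul]]
      rw [show Uᵀ * (U * (S * V)) = S * V by rw [← Matrix.mul_assoc, hU1, Matrix.one_mul]]
      rw [← Matrix.mul_assoc Sᵀ S V, diag_StS S hS0]
      rw [← Matrix.mul_assoc (diagonal d) (diagonal d) V, diagonal_mul_diagonal]
    have hXsqrt : Vᵀ * diagonal d * V = hN.sqrt := hXpsd.eq_sqrt_of_sq_eq hN hXsq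
    rw [hWM, hXsqrt]
    rfl

private lemma part1core {m n : ℕ} (M : Matrix (Fin m) (Fin n) ℝ) (Q : Matrix (Fin n) (Fin n) ℝ)
    (e : Fin n → ℝ) (hQ1 : Q * Qᵀ = 1) (hQ2 : Qᵀ * Q = 1)
    (hMM : Mᵀ * M = (Q * diagonal e * Qᵀ) * (Q * diagonal e * Qᵀ)) :
    ∃ W : Matrix (Fin m) (Fin n) ℝ,
      ((1 : Matrix (Fin n) (Fin n) ℝ) - Wᵀ * W).PosSemidef ∧
      Wᵀ * M = Q * diagonal e * Qᵀ := by
  set f : Fin n → ℝ := fun j => if e j = 0 then 0 else (e j)⁻¹ with hf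
  have sand : ∀ a b : Fin n → ℝ,
      (Q * diagonal a * Qᵀ) * (Q * diagonal b * Qᵀ) = Q * diagonal (a * b) * Qᵀ := by
    intro a b
    have hc1 : Qᵀ * (Q * (diagonal b * Qᵀ)) = diagonal b * Qᵀ := by
      rw [← Matrix.mul_assoc, hQ2, Matrix.one_mul]
    have hdd : diagonal a * (diagonal b * Qᵀ) = diagonal (a * b) * Qᵀ := by
      rw [← Matrix.mul_assoc, diagonal_mul_diagonal]
      rfl
    simp only [Matrix.mul_assoc, hc1, hdd]
  have hMM2 : Mᵀ * M = Q * diagonal (e * e) * Qᵀ := by rw [hMM, sand]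
  refine ⟨M * (Q * diagonal f * Qᵀ), ?_, ?_⟩
  · -- PSD part
    have e1 : (M * (Q * diagonal f * Qᵀ))ᵀ * (M * (Q * diagonal f * Qᵀ))
        = (Q * diagonal f * Qᵀ) * (Mᵀ * M) * (Q * diagonal f * Qᵀ) := by
      simp only [transpose_mul, diagonal_transpose, transpose_transpose, Matrix.mul_assoc]
    have hWW : (M * (Q * diagonal f * Qᵀ))ᵀ * (M * (Q * diagonal f * Qᵀ))
        = Q * diagonal (f * (e * e) * f) * Qᵀ := by
      rw [e1, hMM2, sand, sand]
    have hdiag : diagonal (fun j => 1 - (f * (e * e) * f) j)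
        = 1 - diagonal (f * (e * e) * f) := by
      ext j j'
      rcases eq_or_ne j j' with rfl | hne
      · simp
      · simp [diagonal_apply_ne _ hne, one_apply_ne hne]
    have hsub : (1 : Matrix (Fin n) (Fin n) ℝ)
          - (M * (Q * diagonal f * Qᵀ))ᵀ * (M * (Q * diagonal f * Qᵀ))
        = Q * diagonal (fun j => 1 - (f * (e * e) * f) j) * Qᵀ := by
      rw [hWW, hdiag, Matrix.mul_sub, Matrix.sub_mul, Matrix.mul_one, hQ1]
    rw [hsub]
    have hdpsd : (diagonal (fun j => 1 - (f * (e * e) * f) j)).PosSemidef := by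
      refine posSemidef_diagonal_iff.mpr fun j => ?_
      simp only [Pi.mul_apply, hf]
      rcases eq_or_ne (e j) 0 with h | h
      · simp [h]
      · rw [if_neg h]
        have : (e j)⁻¹ * (e j * e j) * (e j)⁻¹ = 1 := by field_simp
        rw [this]
        norm_num
    have := hdpsd.mul_mul_conjTranspose_same Q
    rwa [ct_eq] at this
  · -- product part
    have e2 : (M * (Q * diagonal f * Qᵀ))ᵀ * M = (Q * diagonal f * Qᵀ) * (Mᵀ * M) := by
      simp only [transpose_mul, diagonal_transpose, transpose_transpose, Matrix.mul_assoc]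
    have hfe : f * (e * e) = e := by
      funext j
      show (if e j = 0 then 0 else (e j)⁻¹) * (e j * e j) = e j
      rcases eq_or_ne (e j) 0 with h | h
      · simp [h]
      · rw [if_neg h]
        field_simp
    rw [e2, hMM2, sand, hfe]

theorem stmt_6 {m n : ℕ} (hm : 0 < m) (hn : 0 < n)
    (A : Matrix (Fin m) (Fin m) ℝ) (B : Matrix (Fin n) (Fin n) ℝ)
    (C : Matrix (Fin m) (Fin n) ℝ)
    (hA : A.PosSemidef) (hB : B.PosSemidef) :
    (∃ Γ : Matrix (Fin m) (Fin n) ℝ,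
      (Matrix.fromBlocks A Γ Γᵀ B).PosSemidef ∧
      (C * Γᵀ).trace = traceNorm (hA.sqrt * C * hB.sqrt)) ∧
    -- in particular, for any singular value decomposition
    -- `A^{1/2} C B^{1/2} = U Σ V`, one may take `Γ = A^{1/2} U V B^{1/2}`
    ∀ (U : Matrix (Fin m) (Fin m) ℝ) (S : Matrix (Fin m) (Fin n) ℝ)
      (V : Matrix (Fin n) (Fin n) ℝ),
      Uᵀ * U = 1 → U * Uᵀ = 1 → Vᵀ * V = 1 → V * Vᵀ = 1 →
      (∀ (i : Fin m) (j : Fin n), (i : ℕ) ≠ (j : ℕ) → S i j = 0) →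
      (∀ (i : Fin m) (j : Fin n), (i : ℕ) = (j : ℕ) → 0 ≤ S i j) →
      hA.sqrt * C * hB.sqrt = U * S * V →
      (Matrix.fromBlocks A (hA.sqrt * U * rectId m n * V * hB.sqrt)
          (hA.sqrt * U * rectId m n * V * hB.sqrt)ᵀ B).PosSemidef ∧
      (C * (hA.sqrt * U * rectId m n * V * hB.sqrt)ᵀ).trace =
        traceNorm (hA.sqrt * C * hB.sqrt) := by
  constructor
  · -- existence, via the polar-type construction from the spectral theorem
    have hN := Matrix.posSemidef_conjTranspose_mul_self (hA.sqrt * C * hB.sqrt)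
    have her : hN.sqrt.IsHermitian := hN.posSemidef_sqrt.1
    set Q : Matrix (Fin n) (Fin n) ℝ := (her.eigenvectorUnitary : Matrix (Fin n) (Fin n) ℝ)
      with hQdef
    have hQ1 : Q * Qᵀ = 1 := by
      rw [hQdef, ← ct_eq, ← star_eq_conjTranspose]
      exact Matrix.mem_unitaryGroup_iff.mp her.eigenvectorUnitary.2
    have hQ2 : Qᵀ * Q = 1 := by
      rw [hQdef, ← ct_eq, ← star_eq_conjTranspose]
      exact Matrix.mem_unitaryGroup_iff'.mp her.eigenvectorUnitary.2
    have hco : (RCLike.ofReal ∘ her.eigenvalues : Fin n → ℝ) = her.eigenvalues := by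
      funext j
      simp [RCLike.ofReal_real_eq_id]
    have spec : hN.sqrt = Q * diagonal her.eigenvalues * Qᵀ := by
      rw [hQdef, ← ct_eq, ← star_eq_conjTranspose, ← hco]
      have := her.spectral_theorem
      rwa [Unitary.conjStarAlgAut_apply] at this
    have hMM : (hA.sqrt * C * hB.sqrt)ᵀ * (hA.sqrt * C * hB.sqrt)
        = (Q * diagonal her.eigenvalues * Qᵀ) * (Q * diagonal her.eigenvalues * Qᵀ) := by
      rw [← spec, ← ct_eq]
      exact hN.sqrt_mul_self.symm
    obtain ⟨W, hpsd, hprod⟩ := part1core _ Q her.eigenvalues hQ1 hQ2 hMM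
    refine ⟨hA.sqrt * W * hB.sqrt, block_psd hA hB W _ rfl hpsd, ?_⟩
    rw [trace_reduce hA hB C W _ rfl, hprod, ← spec]
    rfl
  · intro U S V hU1 hU2 hV1 hV2 hS0 hS1 hM
    obtain ⟨h1, h2⟩ := part2 hA hB U S V hU1 hU2 hV1 hV2 hS0 hS1 hM
    have hΓ : hA.sqrt * U * rectId m n * V * hB.sqrt
        = hA.sqrt * (U * rectId m n * V) * hB.sqrt := by
      simp only [Matrix.mul_assoc]
    exact ⟨block_psd hA hB _ _ hΓ h1,
      by rw [trace_reduce hA hB C (U * rectId m n * V) _ hΓ, h2]⟩
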